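/- arXiv:1805.04165 — 3 statements merged into one kernel-verified Lean document; each statement's English description precedes it below -/
import Mathlib

section
/- Let c > 0. There exists a constant L > 0, depending only on c, with the following property: for every n ≥ 1 and every collection X_1, …, X_n of mutually independent integer-valued random variables with means μ_i = E[X_i] satisfying Pr[X_i − μ_i ≥ t] ≤ exp(−c·t) for every i ∈ [n] and every real t > 0, it holds that Pr[Σ_{i=1}^n (X_i − μ_i) ≥ t] ≤ exp(−(c/3)·t) for every real t ≥ L·n. -/
open MeasureTheory ProbabilityTheory

/-!
An exponential upper tail `P[Y ≥ t] ≤ exp (-c t)` bounds the moment generating function: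
by the layer-cake formula, `E[exp (s Y)] ≤ c / (c - s)` for `0 < s < c`. For the centred
variables and `s = c / 2` this gives `E[exp (s Y_i)] ≤ 2`, so by independence the sum has
mgf at most `2 ^ n`, and Chernoff's bound yields `exp (-(c/2) t + n log 2)`, which is at most
`exp (-(c/3) t)` once `t ≥ 6 n log 2 / c`.
-/

section ExponentialTail

variable {Ω : Type*} [MeasurableSpace Ω] {μ : Measure Ω} [IsProbabilityMeasure μ]
  {c s : ℝ} {Y : Ω → ℝ}

lemma measure_lt_exp_mul_le_rpow (hs : 0 < s)
    (htail : ∀ t : ℝ, 0 < t → μ.real {ω | Y ω ≥ t} ≤ Real.exp (-c * t))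
    {t : ℝ} (ht : 1 < t) :
    μ {ω | t < Real.exp (s * Y ω)} ≤ ENNReal.ofReal (t ^ (-c / s)) := by
  have ht0 : 0 < t := one_pos.trans ht
  have hsub : {ω | t < Real.exp (s * Y ω)} ⊆ {ω | Y ω ≥ Real.log t / s} := by
    intro ω hω
    have : Real.log t < s * Y ω := by
      simpa using Real.log_lt_log ht0 hω
    simp only [Set.mem_ofPred_eq, ge_iff_le, div_le_iff₀ hs]
    linarith
  calc μ {ω | t < Real.exp (s * Y ω)}
      ≤ μ {ω | Y ω ≥ Real.log t / s} := measure_mono hsub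
    _ = ENNReal.ofReal (μ.real {ω | Y ω ≥ Real.log t / s}) :=
        (ofReal_measureReal (measure_ne_top _ _)).symm
    _ ≤ ENNReal.ofReal (Real.exp (-c * (Real.log t / s))) :=
        ENNReal.ofReal_le_ofReal (htail _ (div_pos (Real.log_pos ht) hs))
    _ = ENNReal.ofReal (t ^ (-c / s)) := by
        rw [Real.rpow_def_of_pos ht0]
        congr 2
        ring

lemma lintegral_exp_mul_le_of_tail (hs : 0 < s) (hsc : s < c) (hY : Measurable Y)
    (htail : ∀ t : ℝ, 0 < t → μ.real {ω | Y ω ≥ t} ≤ Real.exp (-c * t)) :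
    ∫⁻ ω, ENNReal.ofReal (Real.exp (s * Y ω)) ∂μ ≤ ENNReal.ofReal (c / (c - s)) := by
  have hcs : 0 < c - s := sub_pos.2 hsc
  have hexp : -c / s < -1 := by rw [div_lt_iff₀ hs]; linarith
  have hsmall : ∫⁻ t in Set.Ioc (0 : ℝ) 1, μ {ω | t < Real.exp (s * Y ω)} ≤ 1 :=
    calc ∫⁻ t in Set.Ioc (0 : ℝ) 1, μ {ω | t < Real.exp (s * Y ω)}
        ≤ ∫⁻ _ in Set.Ioc (0 : ℝ) 1, 1 := lintegral_mono fun _ => prob_le_one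
      _ = 1 := by simp
  have hlarge : ∫⁻ t in Set.Ioi (1 : ℝ), μ {ω | t < Real.exp (s * Y ω)} ≤
      ENNReal.ofReal (s / (c - s)) :=
    calc ∫⁻ t in Set.Ioi (1 : ℝ), μ {ω | t < Real.exp (s * Y ω)}
        ≤ ∫⁻ t in Set.Ioi (1 : ℝ), ENNReal.ofReal (t ^ (-c / s)) :=
          setLIntegral_mono' measurableSet_Ioi fun t ht => measure_lt_exp_mul_le_rpow hs htail ht
      _ = ENNReal.ofReal (∫ t in Set.Ioi (1 : ℝ), t ^ (-c / s)) :=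
          (ofReal_integral_eq_lintegral_ofReal (integrableOn_Ioi_rpow_of_lt hexp one_pos)
            ((ae_restrict_iff' measurableSet_Ioi).2 (.of_forall fun t ht =>
              Real.rpow_nonneg (zero_le_one.trans (le_of_lt ht)) _))).symm
      _ = ENNReal.ofReal (s / (c - s)) := by
          rw [integral_Ioi_rpow_of_lt hexp one_pos, Real.one_rpow]
          have hden : -c / s + 1 = -((c - s) / s) := by field_simp; ring
          rw [hden, neg_div_neg_eq, one_div_div]
  rw [lintegral_eq_lintegral_meas_lt μ (.of_forall fun _ => (Real.exp_pos _).le)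
      (hY.const_mul s).exp.aemeasurable,
    ← Set.Ioc_union_Ioi_eq_Ioi zero_le_one,
    lintegral_union measurableSet_Ioi Set.Ioc_disjoint_Ioi_same]
  calc _ ≤ 1 + ENNReal.ofReal (s / (c - s)) := add_le_add hsmall hlarge
    _ = ENNReal.ofReal (c / (c - s)) := by
        rw [← ENNReal.ofReal_one, ← ENNReal.ofReal_add zero_le_one (by positivity)]
        congr 1
        field_simp
        ring

lemma integrable_exp_mul_of_tail (hs : 0 < s) (hsc : s < c) (hY : Measurable Y)
    (htail : ∀ t : ℝ, 0 < t → μ.real {ω | Y ω ≥ t} ≤ Real.exp (-c * t)) :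
    Integrable (fun ω => Real.exp (s * Y ω)) μ := by
  refine ⟨(hY.const_mul s).exp.aestronglyMeasurable, ?_⟩
  rw [hasFiniteIntegral_iff_ofReal (.of_forall fun _ => (Real.exp_pos _).le)]
  exact (lintegral_exp_mul_le_of_tail hs hsc hY htail).trans_lt ENNReal.ofReal_lt_top

lemma mgf_le_of_tail (hs : 0 < s) (hsc : s < c) (hY : Measurable Y)
    (htail : ∀ t : ℝ, 0 < t → μ.real {ω | Y ω ≥ t} ≤ Real.exp (-c * t)) :
    mgf Y μ s ≤ c / (c - s) := by
  rw [mgf, integral_eq_lintegral_of_nonneg_ae (.of_forall fun _ => (Real.exp_pos _).le)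
    (hY.const_mul s).exp.aestronglyMeasurable]
  refine ENNReal.toReal_le_of_le_ofReal ?_ (lintegral_exp_mul_le_of_tail hs hsc hY htail)
  exact div_nonneg (hs.trans hsc).le (sub_pos.2 hsc).le

lemma measure_sum_ge_le_of_tail {ι : Type*} [Fintype ι] {Y : ι → Ω → ℝ}
    (hs : 0 < s) (hsc : s < c) (hY : ∀ i, Measurable (Y i)) (hindep : iIndepFun Y μ)
    (htail : ∀ i, ∀ t : ℝ, 0 < t → μ.real {ω | Y i ω ≥ t} ≤ Real.exp (-c * t)) (t : ℝ) :
    μ.real {ω | ∑ i, Y i ω ≥ t} ≤ Real.exp (-s * t) * (c / (c - s)) ^ Fintype.card ι := by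
  have hmgf : mgf (∑ i, Y i) μ s ≤ (c / (c - s)) ^ Fintype.card ι := by
    rw [hindep.mgf_sum hY, ← Finset.card_univ, ← Finset.prod_const]
    exact Finset.prod_le_prod (fun _ _ => mgf_nonneg) fun i _ =>
      mgf_le_of_tail hs hsc (hY i) (htail i)
  have hchernoff := measure_ge_le_exp_mul_mgf t hs.le
    (hindep.integrable_exp_mul_sum hY (s := Finset.univ) fun i _ =>
      integrable_exp_mul_of_tail hs hsc (hY i) (htail i))
  simp only [Finset.sum_apply] at hchernoff
  exact hchernoff.trans (mul_le_mul_of_nonneg_left hmgf (Real.exp_pos _).le)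

end ExponentialTail

/-- For c > 0 there is L > 0 depending only on c such that for any
n ≥ 1 independent integer-valued random variables X_1, …, X_n with means μ_i and
Pr[X_i − μ_i ≥ t] ≤ exp(−c·t) for all t > 0, we have
Pr[Σ (X_i − μ_i) ≥ t] ≤ exp(−(c/3)·t) for every t ≥ L·n. -/
theorem sum_of_tail_bounded_concentration (c : ℝ) (hc : 0 < c) :
    ∃ L : ℝ, 0 < L ∧
      ∀ (n : ℕ), 1 ≤ n →
      ∀ (Ω : Type) [MeasureSpace Ω] [IsProbabilityMeasure (ℙ : Measure Ω)]
        (X : Fin n → Ω → ℤ),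
        (∀ i, Measurable (X i)) →
        (∀ i, Integrable (fun ω => (X i ω : ℝ)) ℙ) →
        iIndepFun X ℙ →
        (∀ i, ∀ t : ℝ, 0 < t →
          (ℙ {ω | (X i ω : ℝ) - (∫ ω', (X i ω' : ℝ) ∂ℙ) ≥ t}).toReal ≤ Real.exp (-c * t)) →
        ∀ t : ℝ, L * n ≤ t →
          (ℙ {ω | (∑ i, ((X i ω : ℝ) - (∫ ω', (X i ω' : ℝ) ∂ℙ))) ≥ t}).toReal ≤
            Real.exp (-(c / 3) * t) := by
  refine ⟨6 * Real.log 2 / c, by positivity, fun n _ Ω _ _ X hX _ hindep htail t ht => ?_⟩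
  have hcentered : iIndepFun (fun i ω => (X i ω : ℝ) - ∫ ω', (X i ω' : ℝ) ∂ℙ) ℙ :=
    hindep.comp (fun i (z : ℤ) => (z : ℝ) - ∫ ω', (X i ω' : ℝ) ∂ℙ) fun _ => measurable_from_top
  have hchernoff := measure_sum_ge_le_of_tail (half_pos hc) (half_lt_self hc)
    (fun i => (measurable_from_top.comp (hX i)).sub_const _) hcentered htail t
  have htwo : c / (c - c / 2) = 2 := by field_simp; norm_num
  have hnt : n * Real.log 2 ≤ c / 6 * t := by
    rw [div_mul_eq_mul_div, div_le_iff₀ hc] at ht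
    linarith
  rw [htwo, Fintype.card_fin] at hchernoff
  calc _ ≤ Real.exp (-(c / 2) * t) * 2 ^ n := hchernoff
    _ = Real.exp (-(c / 2) * t + n * Real.log 2) := by
        rw [Real.exp_add, Real.exp_nat_mul, Real.exp_log two_pos]
    _ ≤ Real.exp (-(c / 3) * t) := Real.exp_le_exp.2 (by linarith)
end

section
/- Fix p ∈ (0,1). There exists a constant C > 0, depending only on p, such that for every T ≥ 1 and every integer Δ ≥ 2 the following holds: if Y_1, Y_2, …, Y_T are mutually independent random variables where each Y_i is the maximum of at most Δ mutually independent geometric random variables, each with success probability at least p, then Pr[Σ_{i=1}^T Y_i ≥ C·(T·ln Δ + t)] ≤ exp(−t) for every real t ≥ 0. -/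
/-!
A maximum of `k ≤ Δ` geometric variables with parameters `≥ p` has, by the union bound,
`P(Y ≥ m) ≤ Δ (1 - p)^m`. Take `θ = -log (1 - p) / 2`, half the decay rate of this tail.
Summing the tail against the increments of `n ↦ e^{θ n}` gives `E e^{θ Y} ≤ 1 + Δ`, and
independence with the Chernoff bound gives `P(∑ Y_i ≥ a) ≤ e^{-θ a} (1 + Δ)^T`.
Since `1 + Δ ≤ Δ²`, the choice `C = 2 / θ` makes this at most `e^{-2t} ≤ e^{-t}`.
-/

open MeasureTheory ProbabilityTheory
open scoped ENNReal

section

variable {Ω : Type*} [MeasurableSpace Ω] {μ : Measure Ω}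

theorem measure_le_eq_of_geometric [IsFiniteMeasure μ] {G : Ω → ℕ} (hG : Measurable G) {q : ℝ}
    (hq0 : 0 < q) (hq1 : q ≤ 1) (hpmf : ∀ s : ℕ, μ.real {ω | G ω = s} = q * (1 - q) ^ s)
    (m : ℕ) : μ {ω | m ≤ G ω} = ENNReal.ofReal ((1 - q) ^ m) := by
  have hpmf' (s : ℕ) : μ {ω | G ω = s} = ENNReal.ofReal (q * (1 - q) ^ s) := by
    rw [← hpmf s, ofReal_measureReal]
  have hunion : {ω | m ≤ G ω} = ⋃ u : ℕ, {ω | G ω = m + u} := by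
    ext ω
    simp only [Set.mem_ofPred_eq, Set.mem_iUnion]
    exact ⟨fun h => ⟨G ω - m, by omega⟩, fun ⟨u, hu⟩ => by omega⟩
  have hdisj : Pairwise (Function.onFun Disjoint fun u : ℕ => {ω | G ω = m + u}) :=
    fun u v huv => Set.disjoint_left.mpr fun ω h1 h2 => huv (by simp_all)
  have hsum : ∑' u : ℕ, q * (1 - q) ^ m * (1 - q) ^ u = (1 - q) ^ m := by
    rw [tsum_mul_left, tsum_geometric_of_lt_one (by linarith) (by linarith), sub_sub_cancel,
      mul_comm q, mul_assoc, mul_inv_cancel₀ hq0.ne', mul_one]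
  rw [hunion, measure_iUnion hdisj fun u => hG (measurableSet_singleton _), ← hsum,
    ENNReal.ofReal_tsum_of_nonneg (fun u => by have := sub_nonneg.2 hq1; positivity)
      ((summable_geometric_of_lt_one (by linarith) (by linarith)).mul_left _)]
  exact tsum_congr fun u => by rw [hpmf', pow_add, mul_assoc]

theorem measure_le_sup_le_sum {ι : Type*} [Fintype ι] (G : ι → Ω → ℕ) {m : ℕ} (hm : 0 < m) :
    μ {ω | m ≤ Finset.univ.sup fun j => G j ω} ≤ ∑ j, μ {ω | m ≤ G j ω} := by
  refine (measure_mono fun ω hω => ?_).trans (measure_iUnion_fintype_le μ _)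
  obtain ⟨j, -, hj⟩ := (Finset.le_sup_iff hm).mp hω
  exact Set.mem_iUnion.mpr ⟨j, hj⟩

theorem measure_le_sup_le_of_geometric [IsFiniteMeasure μ] {ι : Type*} [Fintype ι]
    {G : ι → Ω → ℕ} (hG : ∀ j, Measurable (G j)) {q : ι → ℝ} (hq : ∀ j, 0 < q j ∧ q j ≤ 1)
    (hpmf : ∀ j (s : ℕ), μ.real {ω | G j ω = s} = q j * (1 - q j) ^ s) {ρ : ℝ}
    (hρ : ∀ j, 1 - q j ≤ ρ) {m : ℕ} (hm : 0 < m) :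
    μ {ω | m ≤ Finset.univ.sup fun j => G j ω} ≤ Fintype.card ι * ENNReal.ofReal (ρ ^ m) := by
  refine (measure_le_sup_le_sum G hm).trans ?_
  rw [← nsmul_eq_mul, ← Finset.card_univ, ← Finset.sum_const]
  refine Finset.sum_le_sum fun j _ => ?_
  obtain ⟨hq0, hq1⟩ := hq j
  rw [measure_le_eq_of_geometric (hG j) hq0 hq1 (hpmf j)]
  have := sub_nonneg.2 hq1
  gcongr
  exact hρ j

theorem lintegral_sum_range_eq_tsum (μ : Measure Ω) {Y : Ω → ℕ} (hY : Measurable Y)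
    (d : ℕ → ℝ≥0∞) :
    ∫⁻ ω, ∑ s ∈ Finset.range (Y ω), d s ∂μ = ∑' s, d s * μ {ω | s < Y ω} := by
  have hmeas (s : ℕ) : MeasurableSet {ω | s < Y ω} := hY measurableSet_Ioi
  calc ∫⁻ ω, ∑ s ∈ Finset.range (Y ω), d s ∂μ
      = ∫⁻ ω, ∑' s, {ω | s < Y ω}.indicator (fun _ => d s) ω ∂μ := by
        refine lintegral_congr fun ω => ?_
        rw [sum_eq_tsum_indicator]
        refine tsum_congr fun s => ?_
        simp [Set.indicator_apply]
    _ = ∑' s, d s * μ {ω | s < Y ω} := by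
        rw [lintegral_tsum fun s => (measurable_const.indicator (hmeas s)).aemeasurable]
        exact tsum_congr fun s => lintegral_indicator_const (hmeas s) _

theorem ofReal_pow_eq_one_add_sum_range {b : ℝ} (hb : 1 ≤ b) (n : ℕ) :
    ENNReal.ofReal (b ^ n) = 1 + ∑ s ∈ Finset.range n, ENNReal.ofReal ((b - 1) * b ^ s) := by
  have hgeom : b ^ n = 1 + ∑ s ∈ Finset.range n, (b - 1) * b ^ s := by
    rw [← Finset.mul_sum, mul_comm, geom_sum_mul]; ring
  have hb0 : 0 ≤ b - 1 := sub_nonneg.2 hb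
  rw [hgeom, ENNReal.ofReal_add zero_le_one (by positivity), ENNReal.ofReal_one,
    ENNReal.ofReal_sum_of_nonneg fun s _ => by positivity]

theorem lintegral_exp_mul_le_of_measure_lt_le [IsProbabilityMeasure μ] {Y : Ω → ℕ}
    (hY : Measurable Y) {θ : ℝ} (hθ : 0 < θ) {D : ℝ≥0∞}
    (htail : ∀ s : ℕ, μ {ω | s < Y ω} ≤ D * ENNReal.ofReal (Real.exp (-(2 * θ)) ^ (s + 1))) :
    ∫⁻ ω, ENNReal.ofReal (Real.exp (θ * Y ω)) ∂μ ≤ 1 + D := by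
  set r := Real.exp (-θ)
  have hr0 : 0 < r := Real.exp_pos _
  have hr1 : r < 1 := Real.exp_lt_one_iff.2 (neg_lt_zero.2 hθ)
  have hb : 1 ≤ Real.exp θ := Real.one_le_exp hθ.le
  have hterm (s : ℕ) : (Real.exp θ - 1) * Real.exp θ ^ s * Real.exp (-(2 * θ)) ^ (s + 1)
      = (1 - r) * r * r ^ s := by
    have h2 : Real.exp (-(2 * θ)) = (Real.exp θ)⁻¹ ^ 2 := by
      rw [← Real.exp_neg, ← Real.exp_nat_mul]; ring_nf
    rw [h2, show r = (Real.exp θ)⁻¹ from Real.exp_neg θ]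
    simp only [inv_pow]
    field_simp
    ring
  have hsum : ∑' s : ℕ, (1 - r) * r * r ^ s = r := by
    rw [tsum_mul_left, tsum_geometric_of_lt_one hr0.le hr1, mul_comm (1 - r), mul_assoc,
      mul_inv_cancel₀ (sub_pos.2 hr1).ne', mul_one]
  calc ∫⁻ ω, ENNReal.ofReal (Real.exp (θ * Y ω)) ∂μ
      = ∫⁻ ω, 1 + ∑ s ∈ Finset.range (Y ω),
          ENNReal.ofReal ((Real.exp θ - 1) * Real.exp θ ^ s) ∂μ := by
        simp_rw [mul_comm θ, Real.exp_nat_mul, ofReal_pow_eq_one_add_sum_range hb]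
    _ = 1 + ∑' s : ℕ,
          ENNReal.ofReal ((Real.exp θ - 1) * Real.exp θ ^ s) * μ {ω | s < Y ω} := by
        rw [lintegral_add_left measurable_const, lintegral_one, measure_univ,
          lintegral_sum_range_eq_tsum μ hY]
    _ ≤ 1 + ∑' s : ℕ, ENNReal.ofReal ((Real.exp θ - 1) * Real.exp θ ^ s) *
          (D * ENNReal.ofReal (Real.exp (-(2 * θ)) ^ (s + 1))) := by
        gcongr with s; exact htail s
    _ = 1 + D * ENNReal.ofReal r := by
        rw [← hsum, ENNReal.ofReal_tsum_of_nonneg (fun s => by positivity)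
          ((summable_geometric_of_lt_one hr0.le hr1).mul_left _), ← ENNReal.tsum_mul_left]
        refine congrArg _ (tsum_congr fun s => ?_)
        have hb0 : 0 ≤ Real.exp θ - 1 := sub_nonneg.2 hb
        rw [mul_left_comm, ← ENNReal.ofReal_mul (by positivity), hterm]
    _ ≤ 1 + D := by
        gcongr
        exact mul_le_of_le_one_right' (ENNReal.ofReal_le_one.2 hr1.le)

theorem integrable_exp_mul_and_mgf_le_of_lintegral_le {X : Ω → ℝ} (hX : AEMeasurable X μ)
    {t B : ℝ} (hB : 0 ≤ B)
    (h : ∫⁻ ω, ENNReal.ofReal (Real.exp (t * X ω)) ∂μ ≤ ENNReal.ofReal B) :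
    Integrable (fun ω => Real.exp (t * X ω)) μ ∧ mgf X μ t ≤ B := by
  have hm : AEStronglyMeasurable (fun ω => Real.exp (t * X ω)) μ :=
    (hX.const_mul t).exp.aestronglyMeasurable
  have hpos : 0 ≤ᵐ[μ] fun ω => Real.exp (t * X ω) := ae_of_all _ fun _ => (Real.exp_pos _).le
  refine ⟨⟨hm, (hasFiniteIntegral_iff_ofReal hpos).2 (h.trans_lt ENNReal.ofReal_lt_top)⟩, ?_⟩
  rw [mgf, integral_eq_lintegral_of_nonneg_ae hpos hm]
  exact ENNReal.toReal_le_of_le_ofReal hB h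

theorem integrable_exp_mul_and_mgf_sup_geometric_le [IsProbabilityMeasure μ] {ι : Type*}
    [Fintype ι] {G : ι → Ω → ℕ} (hG : ∀ j, Measurable (G j)) {q : ι → ℝ}
    (hq : ∀ j, 0 < q j ∧ q j ≤ 1)
    (hpmf : ∀ j (s : ℕ), μ.real {ω | G j ω = s} = q j * (1 - q j) ^ s) {Y : Ω → ℕ}
    (hY : Measurable Y) (hYsup : ∀ ω, Y ω = Finset.univ.sup fun j => G j ω) {θ : ℝ}
    (hθ : 0 < θ) (hθq : ∀ j, 1 - q j ≤ Real.exp (-(2 * θ))) :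
    Integrable (fun ω => Real.exp (θ * Y ω)) μ ∧
      mgf (fun ω => (Y ω : ℝ)) μ θ ≤ 1 + Fintype.card ι := by
  have htail (s : ℕ) : μ {ω | s < Y ω} ≤
      Fintype.card ι * ENNReal.ofReal (Real.exp (-(2 * θ)) ^ (s + 1)) := by
    simp only [hYsup, Nat.lt_iff_add_one_le]
    exact measure_le_sup_le_of_geometric hG hq hpmf hθq s.succ_pos
  refine integrable_exp_mul_and_mgf_le_of_lintegral_le
    (measurable_from_top.comp hY).aemeasurable (by positivity) ?_
  calc _ ≤ 1 + (Fintype.card ι : ℝ≥0∞) := lintegral_exp_mul_le_of_measure_lt_le hY hθ htail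
    _ = ENNReal.ofReal (1 + Fintype.card ι) := by
        rw [ENNReal.ofReal_add zero_le_one (Nat.cast_nonneg _)]; simp

theorem measure_sum_ge_le_of_mgf_le {ι : Type*} [Fintype ι] {X : ι → Ω → ℝ}
    (hindep : iIndepFun X μ) (hmeas : ∀ i, Measurable (X i)) {θ M : ℝ} (hθ : 0 ≤ θ)
    (hint : ∀ i, Integrable (fun ω => Real.exp (θ * X i ω)) μ) (hM : ∀ i, mgf (X i) μ θ ≤ M)
    (a : ℝ) : μ.real {ω | a ≤ ∑ i, X i ω} ≤ Real.exp (-θ * a) * M ^ Fintype.card ι := by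
  have := hindep.isProbabilityMeasure
  calc μ.real {ω | a ≤ ∑ i, X i ω} = μ.real {ω | a ≤ (∑ i, X i) ω} := by
        simp only [Finset.sum_apply]
    _ ≤ Real.exp (-θ * a) * mgf (∑ i, X i) μ θ :=
        measure_ge_le_exp_mul_mgf a hθ (hindep.integrable_exp_mul_sum hmeas fun i _ => hint i)
    _ = Real.exp (-θ * a) * ∏ i, mgf (X i) μ θ := by rw [hindep.mgf_sum hmeas]
    _ ≤ Real.exp (-θ * a) * M ^ Fintype.card ι := by
        gcongr
        rw [← Finset.card_univ, ← Finset.prod_const]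
        exact Finset.prod_le_prod (fun i _ => mgf_nonneg) fun i _ => hM i

end

theorem exp_neg_two_mul_mul_one_add_pow_le {Δ : ℝ} (hΔ : 2 ≤ Δ) (T : ℕ) {t : ℝ} (ht : 0 ≤ t) :
    Real.exp (-(2 * (T * Real.log Δ + t))) * (1 + Δ) ^ T ≤ Real.exp (-t) := by
  have hpow : (Δ ^ 2) ^ T = Real.exp ((2 * T : ℕ) * Real.log Δ) := by
    rw [Real.exp_nat_mul, Real.exp_log (by linarith), pow_mul]
  calc Real.exp (-(2 * (T * Real.log Δ + t))) * (1 + Δ) ^ T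
      ≤ Real.exp (-(2 * (T * Real.log Δ + t))) * (Δ ^ 2) ^ T := by gcongr; nlinarith
    _ ≤ Real.exp (-t) := by
        rw [hpow, ← Real.exp_add, Real.exp_le_exp]
        push_cast
        linarith

/-- Fix p ∈ (0,1). There is C > 0 depending only on p such that for
every T ≥ 1 and Δ ≥ 2, if Y_1, …, Y_T are independent random variables, each the
maximum of at most Δ independent geometric random variables with success
probability at least p, then Pr[Σ Y_i ≥ C·(T·ln Δ + t)] ≤ exp(−t) for all t ≥ 0. -/
theorem sum_of_max_of_geometrics_tail (p : ℝ) (hp : p ∈ Set.Ioo (0 : ℝ) 1) :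
    ∃ C : ℝ, 0 < C ∧
      ∀ (T : ℕ), 1 ≤ T → ∀ (Δ : ℕ), 2 ≤ Δ →
      ∀ (Ω : Type) [MeasureSpace Ω] [IsProbabilityMeasure (ℙ : Measure Ω)]
        (Y : Fin T → Ω → ℕ),
        (∀ i, Measurable (Y i)) →
        iIndepFun Y ℙ →
        (∀ i : Fin T, ∃ (k : ℕ) (_ : 1 ≤ k) (_ : k ≤ Δ)
            (G : Fin k → Ω → ℕ) (q : Fin k → ℝ),
          (∀ j, Measurable (G j)) ∧
          (∀ j, p ≤ q j ∧ q j < 1) ∧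
          iIndepFun G ℙ ∧
          (∀ j (s : ℕ), (ℙ {ω | G j ω = s}).toReal = q j * (1 - q j) ^ s) ∧
          (∀ ω, Y i ω = Finset.univ.sup (fun j => G j ω))) →
        ∀ t : ℝ, 0 ≤ t →
          (ℙ {ω | C * ((T : ℝ) * Real.log Δ + t) ≤ ∑ i, (Y i ω : ℝ)}).toReal ≤
            Real.exp (-t) := by
  obtain ⟨hp0, hp1⟩ := hp
  set θ := -Real.log (1 - p) / 2
  have hθ : 0 < θ := div_pos (neg_pos.2 (Real.log_neg (sub_pos.2 hp1) (by linarith))) two_pos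
  have hexp : Real.exp (-(2 * θ)) = 1 - p := by
    rw [show -(2 * θ) = Real.log (1 - p) by ring, Real.exp_log (sub_pos.2 hp1)]
  refine ⟨2 / θ, div_pos two_pos hθ, ?_⟩
  intro T _ Δ hΔ Ω _ _ Y hYmeas hYindep hYmax t ht
  have hYmeas' (i : Fin T) : Measurable fun ω => (Y i ω : ℝ) :=
    measurable_from_top.comp (hYmeas i)
  have hmgf (i : Fin T) : Integrable (fun ω => Real.exp (θ * Y i ω)) ℙ ∧
      mgf (fun ω => (Y i ω : ℝ)) ℙ θ ≤ 1 + Δ := by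
    obtain ⟨k, -, hkΔ, G, q, hGmeas, hq, -, hpmf, hYsup⟩ := hYmax i
    obtain ⟨hint, hmgf⟩ := integrable_exp_mul_and_mgf_sup_geometric_le hGmeas
      (fun j => ⟨hp0.trans_le (hq j).1, (hq j).2.le⟩) hpmf (hYmeas i) hYsup hθ
      fun j => hexp ▸ sub_le_sub_left (hq j).1 1
    refine ⟨hint, hmgf.trans ?_⟩
    rw [Fintype.card_fin]
    gcongr
  calc (ℙ {ω | 2 / θ * ((T : ℝ) * Real.log Δ + t) ≤ ∑ i, (Y i ω : ℝ)}).toReal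
      ≤ Real.exp (-θ * (2 / θ * (T * Real.log Δ + t))) * (1 + Δ) ^ Fintype.card (Fin T) :=
        measure_sum_ge_le_of_mgf_le (hYindep.comp _ fun _ => measurable_from_top) hYmeas' hθ.le
          (fun i => (hmgf i).1) (fun i => (hmgf i).2) _
    _ = Real.exp (-(2 * (T * Real.log Δ + t))) * (1 + Δ) ^ T := by
        rw [Fintype.card_fin, neg_mul, ← mul_assoc, mul_div_cancel₀ _ hθ.ne']
    _ ≤ Real.exp (-t) := exp_neg_two_mul_mul_one_add_pow_le (by exact_mod_cast hΔ) T ht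
end

section
/- Fix p ∈ (0,1). There exists a constant c > 0, depending only on p, with the following property. Let G = (V, E) be a finite simple graph with |V| = n ≥ 2 vertices and maximum degree at most Δ, where Δ ≥ 2, and let T ≥ 1 be an integer. Let (Y_{v,i})_{v ∈ V, 1 ≤ i ≤ T} be mutually independent random variables where each Y_{v,i} is the maximum of at most Δ mutually independent geometric random variables, each with success probability at least p. For each v ∈ V let Z_v be the maximum, over all blaming chains (v_T, …, v_1) of length T ending at v, of Σ_{i=1}^T Y_{v_i, i}. Then for every real k ≥ 0, Pr[there exists v ∈ V with Z_v ≥ c·(T·ln Δ + ln n + k)] ≤ exp(−k). -/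
open MeasureTheory ProbabilityTheory
open scoped Classical

/-- `w` is in the closed 2-hop neighborhood Γ²(v) of `v`:
there is a walk from `v` to `w` of length at most 2 (i.e. dist(v,w) ≤ 2). -/
def InTwoHop {V : Type*} (G : SimpleGraph V) (v w : V) : Prop :=
  ∃ pth : G.Walk v w, pth.length ≤ 2

/-- A blaming chain of length `x` ending at `v`: a sequence (v_x, …, v_1) with
v_x = v and v_i ∈ Γ²(v_{i+1}).  Here `f j` encodes v_{j+1}. -/
def IsBlamingChain {V : Type*} (G : SimpleGraph V) (x : ℕ) (v : V) (f : Fin x → V) : Prop :=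
  (∀ h : 0 < x, f ⟨x - 1, Nat.sub_lt h Nat.one_pos⟩ = v) ∧
  (∀ (j : ℕ) (h : j + 1 < x), InTwoHop G (f ⟨j + 1, h⟩) (f ⟨j, Nat.lt_of_succ_lt h⟩))


/-!
Each `Y v i` is a maximum of at most `Δ` geometric variables, so `Pr[t ≤ Y v i] ≤ Δ r^(2t)`
with `r = √(1 - p) = e^(-θ)`. For a fixed chain, `m ≤ ∑ Y_i` forces the truncations
`t_i = min Y_i m` to satisfy `t_i ≤ Y_i`, `t_i ≤ m` and `m ≤ ∑ t_i`; by independence and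
`r^(2 ∑ t_i) ≤ r^m r^(∑ t_i)`, summing over all such `t` gives
`Pr[m ≤ ∑ Y_i] ≤ (Δ / (1 - r))^T r^m`. There are at most `n (1 + Δ + Δ²)^(T-1)` chains, and
with `1 / (1 - r) ≤ 2^K ≤ Δ^K` the union bound is `exp (log n + (K + 4) T log Δ - θ m)`,
so `c = (K + 4) / θ` works.
-/

open Finset

section Tails

variable {Ω : Type*} [MeasurableSpace Ω] {μ : Measure Ω}

theorem measureReal_le_eq_of_geometric [IsProbabilityMeasure μ] {X : Ω → ℕ} (hX : Measurable X)
    {q : ℝ} (hpmf : ∀ s : ℕ, μ.real {ω | X ω = s} = q * (1 - q) ^ s) (t : ℕ) :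
    μ.real {ω | t ≤ X ω} = (1 - q) ^ t := by
  have hmeas_eq (s : ℕ) : MeasurableSet {ω | X ω = s} := hX (measurableSet_singleton s)
  have hmeas_lt : MeasurableSet {ω | X ω < t} := hX measurableSet_Iio
  have hlt : μ.real {ω | X ω < t} = 1 - (1 - q) ^ t := by
    have hunion : {ω | X ω < t} = ⋃ s ∈ range t, {ω | X ω = s} := by ext; simp
    rw [hunion, measureReal_biUnion_finset (fun a _ b _ hab => Set.disjoint_left.2
      fun _ ha hb => hab (ha.symm.trans hb)) fun s _ => hmeas_eq s]
    simp only [hpmf, ← mul_sum]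
    linear_combination (-1 : ℝ) * geom_sum_mul (1 - q) t
  have hcompl : {ω | t ≤ X ω} = {ω | X ω < t}ᶜ := by ext; simp
  rw [hcompl, probReal_compl_eq_one_sub hmeas_lt, hlt, sub_sub_cancel]

theorem measureReal_le_sup_le_sum [IsFiniteMeasure μ] {ι : Type*} [Fintype ι] [Nonempty ι]
    (X : ι → Ω → ℕ) (t : ℕ) :
    μ.real {ω | t ≤ univ.sup (X · ω)} ≤ ∑ j, μ.real {ω | t ≤ X j ω} := by
  refine (measureReal_mono fun ω hω => ?_).trans (measureReal_iUnion_fintype_le _)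
  obtain ⟨j, -, hj⟩ := exists_mem_eq_sup univ univ_nonempty (X · ω)
  exact Set.mem_iUnion.2 ⟨j, by simpa [hj] using hω⟩

theorem measureReal_le_sup_le_of_geometric [IsProbabilityMeasure μ] {ι : Type*} [Fintype ι]
    [Nonempty ι] {X : ι → Ω → ℕ} (hX : ∀ j, Measurable (X j)) {p : ℝ} {q : ι → ℝ}
    (hq : ∀ j, p ≤ q j ∧ q j ≤ 1)
    (hpmf : ∀ j (s : ℕ), μ.real {ω | X j ω = s} = q j * (1 - q j) ^ s) {Y : Ω → ℕ}
    (hY : ∀ ω, Y ω = univ.sup (X · ω)) (t : ℕ) :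
    μ.real {ω | t ≤ Y ω} ≤ Fintype.card ι * (1 - p) ^ t := by
  calc μ.real {ω | t ≤ Y ω} ≤ ∑ j, μ.real {ω | t ≤ X j ω} := by
        simpa only [hY] using measureReal_le_sup_le_sum X t
    _ ≤ ∑ _j : ι, (1 - p) ^ t := by
        gcongr with j
        rw [measureReal_le_eq_of_geometric (hX j) (hpmf j)]
        exact pow_le_pow_left₀ (by linarith [(hq j).2]) (by linarith [(hq j).1]) t
    _ = Fintype.card ι * (1 - p) ^ t := by rw [sum_const, card_univ, nsmul_eq_mul]

end Tails

section Sums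

variable {Ω ι : Type*} [MeasurableSpace Ω] {μ : Measure Ω} [Fintype ι]

theorem ProbabilityTheory.iIndepFun.measureReal_iInter_le_eq_prod {X : ι → Ω → ℕ}
    (hX : iIndepFun X μ) (t : ι → ℕ) :
    μ.real (⋂ i, {ω | t i ≤ X i ω}) = ∏ i, μ.real {ω | t i ≤ X i ω} := by
  have := hX.measure_inter_preimage_eq_mul univ (sets := fun i => Set.Ici (t i))
    fun _ _ => trivial
  simp only [mem_univ, Set.iInter_true] at this
  simp only [measureReal_def, ← ENNReal.toReal_prod]
  exact congrArg ENNReal.toReal this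

theorem exists_mem_piFinset_le_of_le_sum {X : ι → ℕ} {m : ℕ} (hm : m ≤ ∑ i, X i) :
    ∃ t ∈ (Fintype.piFinset fun _ : ι => range (m + 1)).filter (fun t => m ≤ ∑ i, t i),
      ∀ i, t i ≤ X i := by
  refine ⟨fun i => min (X i) m, ?_, fun i => min_le_left _ _⟩
  simp only [mem_filter, Fintype.mem_piFinset, mem_range]
  refine ⟨fun i => by omega, ?_⟩
  by_cases h : ∃ i, m ≤ X i
  · obtain ⟨i, hi⟩ := h
    calc m = min (X i) m := (min_eq_right hi).symm
      _ ≤ ∑ j, min (X j) m := single_le_sum (f := fun j => min (X j) m) (by simp) (mem_univ i)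
  · push Not at h
    simpa only [fun i => min_eq_left (h i).le] using hm

theorem measureReal_le_sum_le_of_iIndepFun [IsFiniteMeasure μ] {X : ι → Ω → ℕ}
    (hX : iIndepFun X μ) {a r : ℝ} (ha : 0 ≤ a) (hr0 : 0 ≤ r) (hr1 : r < 1)
    (htail : ∀ i t, μ.real {ω | t ≤ X i ω} ≤ a * (r ^ 2) ^ t) (m : ℕ) :
    μ.real {ω | m ≤ ∑ i, X i ω} ≤ (a / (1 - r)) ^ Fintype.card ι * r ^ m := by
  set S := (Fintype.piFinset fun _ : ι => range (m + 1)).filter (fun t => m ≤ ∑ i, t i)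
  have hcover : {ω | m ≤ ∑ i, X i ω} ⊆ ⋃ t ∈ S, ⋂ i, {ω | t i ≤ X i ω} := fun ω hω => by
    obtain ⟨t, ht, hle⟩ := exists_mem_piFinset_le_of_le_sum hω
    exact Set.mem_biUnion ht (Set.mem_iInter.2 hle)
  have hterm (t) (ht : t ∈ S) :
      μ.real (⋂ i, {ω | t i ≤ X i ω}) ≤ a ^ Fintype.card ι * r ^ m * ∏ i, r ^ t i := by
    rw [hX.measureReal_iInter_le_eq_prod, prod_pow_eq_pow_sum]
    calc ∏ i, μ.real {ω | t i ≤ X i ω} ≤ ∏ i, (a * (r ^ 2) ^ t i) :=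
          prod_le_prod (fun _ _ => measureReal_nonneg) fun i _ => htail i (t i)
      _ = a ^ Fintype.card ι * ((r ^ ∑ i, t i) * r ^ ∑ i, t i) := by
          rw [prod_mul_distrib, prod_const, prod_pow_eq_pow_sum, ← pow_mul, ← pow_add,
            card_univ]
          ring_nf
      _ ≤ a ^ Fintype.card ι * (r ^ m * (r ^ ∑ i, t i)) := by
          gcongr _ * (?_ * _)
          exact pow_le_pow_of_le_one hr0 hr1.le (mem_filter.1 ht).2
      _ = _ := by ring
  have hgeom : ∑ j ∈ range (m + 1), r ^ j ≤ 1 / (1 - r) := by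
    have := geom_sum_Ico_le_of_lt_one (m := 0) (n := m + 1) hr0 hr1
    rwa [← range_eq_Ico, pow_zero] at this
  calc μ.real {ω | m ≤ ∑ i, X i ω} ≤ ∑ t ∈ S, μ.real (⋂ i, {ω | t i ≤ X i ω}) :=
        (measureReal_mono hcover (measure_ne_top _ _)).trans (measureReal_biUnion_finset_le _ _)
    _ ≤ ∑ t ∈ Fintype.piFinset (fun _ : ι => range (m + 1)),
          a ^ Fintype.card ι * r ^ m * ∏ i, r ^ t i :=
        (sum_le_sum hterm).trans (sum_le_sum_of_subset_of_nonneg (filter_subset _ _)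
          fun _ _ _ => by positivity)
    _ = a ^ Fintype.card ι * r ^ m * ∏ _i : ι, ∑ j ∈ range (m + 1), r ^ j := by
        rw [← mul_sum, prod_univ_sum]
    _ ≤ a ^ Fintype.card ι * r ^ m * ∏ _i : ι, (1 / (1 - r)) := by gcongr
    _ = (a / (1 - r)) ^ Fintype.card ι * r ^ m := by
        rw [prod_const, card_univ, div_eq_mul_one_div a, mul_pow]; ring

end Sums

section Chains

variable {V : Type*} [Fintype V] (G : SimpleGraph V)

noncomputable def twoHopFinset (v : V) : Finset V := {w | InTwoHop G v w}

noncomputable def blamingChains (T : ℕ) (v : V) : Finset (Fin T → V) :=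
  {f | IsBlamingChain G T v f}

theorem card_twoHopFinset_le [DecidableRel G.Adj] {Δ : ℕ} (hdeg : ∀ v, G.degree v ≤ Δ)
    (v : V) : #(twoHopFinset G v) ≤ 1 + Δ + Δ ^ 2 := by
  have hsub : twoHopFinset G v ⊆
      insert v ((G.neighborFinset v).biUnion fun u => insert u (G.neighborFinset u)) := by
    intro w hw
    obtain ⟨p, hp⟩ := (mem_filter.1 hw).2
    rcases p with _ | ⟨h₁, _ | ⟨h₂, _ | ⟨_, _⟩⟩⟩
    · exact mem_insert_self _ _
    · exact mem_insert_of_mem (mem_biUnion.2 ⟨w, by simpa using h₁, mem_insert_self _ _⟩)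
    · exact mem_insert_of_mem (mem_biUnion.2 ⟨_, by simpa using h₁,
        mem_insert_of_mem (by simpa using h₂)⟩)
    · simp at hp
  have hdeg' (u : V) : #(G.neighborFinset u) ≤ Δ :=
    G.card_neighborFinset_eq_degree u ▸ hdeg u
  calc #(twoHopFinset G v)
      ≤ #((G.neighborFinset v).biUnion fun u => insert u (G.neighborFinset u)) + 1 :=
        (card_le_card hsub).trans (card_insert_le _ _)
    _ ≤ ∑ _u ∈ G.neighborFinset v, (Δ + 1) + 1 := by
        gcongr
        exact card_biUnion_le.trans <|
          sum_le_sum fun u _ => (card_insert_le _ _).trans (by gcongr; exact hdeg' u)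
    _ ≤ 1 + Δ + Δ ^ 2 := by
        rw [sum_const, smul_eq_mul]
        nlinarith [hdeg' v]

theorem card_blamingChains_le {d : ℕ} (hd : ∀ v, #(twoHopFinset G v) ≤ d) (T : ℕ) (v : V) :
    #(blamingChains G (T + 1) v) ≤ d ^ T := by
  induction T generalizing v with
  | zero =>
    refine card_le_one.2 fun f hf g hg => funext fun i => ?_
    rw [Fin.fin_one_eq_zero i]
    exact ((mem_filter.1 hf).2.1 one_pos).trans ((mem_filter.1 hg).2.1 one_pos).symm
  | succ T ih =>
    have hmaps : ∀ f ∈ blamingChains G (T + 2) v,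
        Fin.init f ∈ (twoHopFinset G v).biUnion (blamingChains G (T + 1)) := by
      intro f hf
      obtain ⟨hlast, hstep⟩ := (mem_filter.1 hf).2
      refine mem_biUnion.2 ⟨f ⟨T, by omega⟩, mem_filter.2 ⟨mem_univ _, ?_⟩,
        mem_filter.2 ⟨mem_univ _, fun _ => rfl, fun j hj => hstep j (by omega)⟩⟩
      have hv : f ⟨T + 1, by omega⟩ = v := hlast (by omega)
      exact hv ▸ hstep T (by omega)
    have hinj : Set.InjOn (Fin.init (n := T + 1) (α := fun _ => V))
        (blamingChains G (T + 2) v) := by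
      intro f hf g hg hfg
      rw [← Fin.snoc_init_self f, ← Fin.snoc_init_self g, hfg]
      congr 1
      exact ((mem_filter.1 hf).2.1 (by omega)).trans ((mem_filter.1 hg).2.1 (by omega)).symm
    calc #(blamingChains G (T + 2) v)
        ≤ #((twoHopFinset G v).biUnion (blamingChains G (T + 1))) :=
          card_le_card_of_injOn _ hmaps hinj
      _ ≤ ∑ w ∈ twoHopFinset G v, #(blamingChains G (T + 1) w) := card_biUnion_le
      _ ≤ ∑ _w ∈ twoHopFinset G v, d ^ T := sum_le_sum fun w _ => ih w
      _ ≤ d ^ (T + 1) := by rw [sum_const, smul_eq_mul, pow_succ']; gcongr; exact hd v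

end Chains

section UnionBound

variable {Ω : Type*} [MeasurableSpace Ω] {μ : Measure Ω} [IsFiniteMeasure μ]

theorem measureReal_exists_le_sup'_le {V β : Type*} [Fintype V] (S : V → Finset β)
    (hS : ∀ v, (S v).Nonempty) (X : β → Ω → ℝ) (s : ℝ) :
    μ.real {ω | ∃ v, s ≤ (S v).sup' (hS v) (X · ω)} ≤
      ∑ v, ∑ b ∈ S v, μ.real {ω | s ≤ X b ω} := by
  have hcover : {ω | ∃ v, s ≤ (S v).sup' (hS v) (X · ω)} ⊆
      ⋃ v ∈ univ, ⋃ b ∈ S v, {ω | s ≤ X b ω} := by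
    rintro ω ⟨v, hv⟩
    obtain ⟨b, hb, hsb⟩ := (le_sup'_iff _).1 hv
    exact Set.mem_biUnion (mem_univ v) (Set.mem_biUnion hb hsb)
  exact (measureReal_mono hcover (measure_ne_top _ _)).trans <|
    (measureReal_biUnion_finset_le _ _).trans
      (sum_le_sum fun v _ => measureReal_biUnion_finset_le _ _)

theorem measureReal_le_sum_along_le {V ι : Type*} [Fintype ι] {Y : V → ι → Ω → ℕ}
    (hY : iIndepFun (fun vi : V × ι => Y vi.1 vi.2) μ) {a r : ℝ} (ha : 0 ≤ a) (hr0 : 0 ≤ r)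
    (hr1 : r < 1) (htail : ∀ v i t, μ.real {ω | t ≤ Y v i ω} ≤ a * (r ^ 2) ^ t) (f : ι → V)
    (s : ℝ) :
    μ.real {ω | s ≤ ∑ i, (Y (f i) i ω : ℝ)} ≤ (a / (1 - r)) ^ Fintype.card ι * r ^ ⌈s⌉₊ := by
  have hindep : iIndepFun (fun i => Y (f i) i) μ :=
    hY.precomp (g := fun i => (f i, i)) fun i j h => (Prod.ext_iff.1 h).2
  have hset : {ω | s ≤ ∑ i, (Y (f i) i ω : ℝ)} = {ω | ⌈s⌉₊ ≤ ∑ i, Y (f i) i ω} := by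
    ext ω
    simp [Nat.ceil_le]
  rw [hset]
  exact measureReal_le_sum_le_of_iIndepFun hindep ha hr0 hr1 (fun i => htail (f i) i) _

theorem measureReal_exists_le_sup'_blamingChains_le {V : Type*} [Fintype V]
    (G : SimpleGraph V) {T d : ℕ} (hT : 1 ≤ T) (hd : ∀ v, #(twoHopFinset G v) ≤ d)
    {Y : V → Fin T → Ω → ℕ} (hY : iIndepFun (fun vi : V × Fin T => Y vi.1 vi.2) μ) {a r : ℝ}
    (ha : 0 ≤ a) (hr0 : 0 ≤ r) (hr1 : r < 1)
    (htail : ∀ v i t, μ.real {ω | t ≤ Y v i ω} ≤ a * (r ^ 2) ^ t)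
    (hS : ∀ v, (blamingChains G T v).Nonempty) (s : ℝ) :
    μ.real {ω | ∃ v, s ≤ (blamingChains G T v).sup' (hS v) fun f => ∑ i, (Y (f i) i ω : ℝ)} ≤
      Fintype.card V * ((d : ℝ) ^ (T - 1) * ((a / (1 - r)) ^ T * r ^ ⌈s⌉₊)) := by
  have hcount (v : V) : #(blamingChains G T v) ≤ d ^ (T - 1) := by
    obtain ⟨T, rfl⟩ := Nat.exists_eq_add_of_le' hT
    exact card_blamingChains_le G hd T v
  have hbound : 0 ≤ (a / (1 - r)) ^ T * r ^ ⌈s⌉₊ := by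
    have := sub_pos.2 hr1
    positivity
  calc _ ≤ ∑ v, ∑ f ∈ blamingChains G T v, μ.real {ω | s ≤ ∑ i, (Y (f i) i ω : ℝ)} :=
        measureReal_exists_le_sup'_le _ hS (fun f ω => ∑ i, (Y (f i) i ω : ℝ)) s
    _ ≤ ∑ v, ∑ _f ∈ blamingChains G T v, (a / (1 - r)) ^ T * r ^ ⌈s⌉₊ := by
        gcongr with v _ f
        simpa using measureReal_le_sum_along_le hY ha hr0 hr1 htail f s
    _ ≤ ∑ _v : V, (d : ℝ) ^ (T - 1) * ((a / (1 - r)) ^ T * r ^ ⌈s⌉₊) := by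
        gcongr with v
        rw [sum_const, nsmul_eq_mul]
        exact mul_le_mul_of_nonneg_right (by exact_mod_cast hcount v) hbound
    _ = _ := by rw [sum_const, card_univ, nsmul_eq_mul]

end UnionBound

section Constants

open Real

theorem exists_pos_exp_neg_sq_eq {p : ℝ} (hp : p ∈ Set.Ioo (0 : ℝ) 1) :
    ∃ θ > 0, exp (-θ) ^ 2 = 1 - p := by
  refine ⟨-log (1 - p) / 2,
    div_pos (neg_pos.2 (log_neg (by linarith [hp.2]) (by linarith [hp.1]))) two_pos, ?_⟩
  rw [← exp_nat_mul, Nat.cast_ofNat, show (2 : ℝ) * -(-log (1 - p) / 2) = log (1 - p) by ring,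
    exp_log (by linarith [hp.2])]

theorem cast_mul_pow_mul_exp_neg_le {n Δ T K : ℕ} {θ k : ℝ} (hn : 1 ≤ n) (hΔ : 2 ≤ Δ)
    (hθ : 0 < θ) (hk : 0 ≤ k) (hK : 1 / (1 - exp (-θ)) ≤ 2 ^ K) :
    (n : ℝ) * (((1 + Δ + Δ ^ 2 : ℕ) : ℝ) ^ (T - 1) * ((Δ / (1 - exp (-θ))) ^ T *
      exp (-θ) ^ ⌈(K + 4) / θ * (T * log Δ + log n + k)⌉₊)) ≤ exp (-k) := by
  set R := T * log Δ + log n + k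
  have hΔ' : (2 : ℝ) ≤ Δ := by exact_mod_cast hΔ
  have hr : exp (-θ) < 1 := exp_lt_one_iff.2 (by linarith)
  have hcount : ((1 + Δ + Δ ^ 2 : ℕ) : ℝ) ^ (T - 1) ≤ ((Δ : ℝ) ^ 3) ^ T := by
    calc ((1 + Δ + Δ ^ 2 : ℕ) : ℝ) ^ (T - 1) ≤ ((1 + Δ + Δ ^ 2 : ℕ) : ℝ) ^ T :=
          pow_le_pow_right₀ (by push_cast; nlinarith) (Nat.sub_le T 1)
      _ ≤ ((Δ : ℝ) ^ 3) ^ T := by gcongr; push_cast; nlinarith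
  have hratio : Δ / (1 - exp (-θ)) ≤ (Δ : ℝ) ^ (K + 1) := by
    calc Δ / (1 - exp (-θ)) = Δ * (1 / (1 - exp (-θ))) := by ring
      _ ≤ Δ * 2 ^ K := by gcongr
      _ ≤ Δ * Δ ^ K := by gcongr
      _ = (Δ : ℝ) ^ (K + 1) := by ring
  have hdecay : exp (-θ) ^ ⌈(K + 4) / θ * R⌉₊ ≤ exp (-((K + 4) * R)) := by
    rw [← exp_nat_mul, exp_le_exp]
    have := Nat.le_ceil ((K + 4) / θ * R)
    have : (K + 4) / θ * R * θ = (K + 4) * R := by field_simp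
    nlinarith
  have hlog : (n : ℝ) * ((Δ : ℝ) ^ 3) ^ T * ((Δ : ℝ) ^ (K + 1)) ^ T =
      exp (log n + (K + 4) * T * log Δ) := by
    calc (n : ℝ) * ((Δ : ℝ) ^ 3) ^ T * ((Δ : ℝ) ^ (K + 1)) ^ T
        = exp (log n) * exp (log Δ) ^ ((K + 4) * T) := by
          rw [exp_log (by positivity), exp_log (by positivity)]; ring
      _ = exp (log n + (K + 4) * T * log Δ) := by
          rw [← exp_nat_mul, ← exp_add]; push_cast; ring_nf
  calc _ ≤ (n : ℝ) * (((Δ : ℝ) ^ 3) ^ T * (((Δ : ℝ) ^ (K + 1)) ^ T * exp (-((K + 4) * R)))) := by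
        gcongr
    _ = exp (log n + (K + 4) * T * log Δ - (K + 4) * R) := by
        rw [sub_eq_add_neg, exp_add (_ + _), ← hlog]; ring
    _ ≤ exp (-k) := by
        rw [exp_le_exp]
        have : 0 ≤ log n := log_nonneg (by exact_mod_cast hn)
        have : 0 ≤ log Δ := log_nonneg (by linarith)
        nlinarith

end Constants

/-- Fix p ∈ (0,1).  There is c > 0 depending only on p such that for
every graph G on n ≥ 2 vertices with max degree at most Δ (Δ ≥ 2), every T ≥ 1,
and mutually independent random variables Y_{v,i} (v ∈ V, 1 ≤ i ≤ T), each the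
maximum of at most Δ independent geometric random variables with success
probability at least p, the following holds.  Letting Z_v be the maximum over
blaming chains of length T ending at v of Σ_{i=1}^T Y_{v_i,i}, for every k ≥ 0,
Pr[∃ v, Z_v ≥ c·(T·ln Δ + ln n + k)] ≤ exp(−k). -/
theorem blaming_chains_whp_bound (p : ℝ) (hp : p ∈ Set.Ioo (0 : ℝ) 1) :
    ∃ c : ℝ, 0 < c ∧
      ∀ (V : Type) [Fintype V] (G : SimpleGraph V) [DecidableRel G.Adj]
        (Δ : ℕ), 2 ≤ Δ → 2 ≤ Fintype.card V →
        (∀ v : V, G.degree v ≤ Δ) →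
        ∀ (T : ℕ), 1 ≤ T →
        ∀ (Ω : Type) [MeasureSpace Ω] [IsProbabilityMeasure (ℙ : Measure Ω)]
          (Y : V → Fin T → Ω → ℕ),
          (∀ v i, Measurable (Y v i)) →
          iIndepFun (fun vi : V × Fin T => Y vi.1 vi.2) ℙ →
          (∀ (v : V) (i : Fin T), ∃ (m : ℕ) (_ : 1 ≤ m) (_ : m ≤ Δ)
              (Geo : Fin m → Ω → ℕ) (q : Fin m → ℝ),
            (∀ j, Measurable (Geo j)) ∧
            (∀ j, p ≤ q j ∧ q j < 1) ∧
            iIndepFun Geo ℙ ∧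
            (∀ j (s : ℕ), (ℙ {ω | Geo j ω = s}).toReal = q j * (1 - q j) ^ s) ∧
            (∀ ω, Y v i ω = Finset.univ.sup (fun j => Geo j ω))) →
          ∀ k : ℝ, 0 ≤ k →
            (ℙ {ω | ∃ v : V,
                c * ((T : ℝ) * Real.log Δ + Real.log (Fintype.card V) + k) ≤
                  (Finset.univ.filter
                      (fun f : Fin T → V => IsBlamingChain G T v f)).sup'
                    ⟨fun _ => v, Finset.mem_filter.mpr ⟨Finset.mem_univ _,
                      fun _ => rfl, fun _ _ => ⟨SimpleGraph.Walk.nil, by simp⟩⟩⟩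
                    (fun f => ∑ i : Fin T, (Y (f i) i ω : ℝ))}).toReal ≤
              Real.exp (-k) := by
  obtain ⟨θ, hθ, hr2⟩ := exists_pos_exp_neg_sq_eq hp
  have hr1 : Real.exp (-θ) < 1 := Real.exp_lt_one_iff.2 (by linarith)
  obtain ⟨K, hK⟩ := pow_unbounded_of_one_lt (1 / (1 - Real.exp (-θ))) one_lt_two
  refine ⟨(K + 4) / θ, by positivity, ?_⟩
  intro V _ G _ Δ hΔ hn hdeg T hT Ω _ _ Y _ hind hYgeom k hk
  have htail (v : V) (i : Fin T) (t : ℕ) :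
      Measure.real ℙ {ω | t ≤ Y v i ω} ≤ Δ * (Real.exp (-θ) ^ 2) ^ t := by
    obtain ⟨m, hm, hmΔ, Geo, q, hGeo, hq, -, hpmf, hY⟩ := hYgeom v i
    have : Nonempty (Fin m) := ⟨⟨0, hm⟩⟩
    calc _ ≤ m * (Real.exp (-θ) ^ 2) ^ t := by
          simpa [hr2] using measureReal_le_sup_le_of_geometric hGeo
            (fun j => ⟨(hq j).1, (hq j).2.le⟩) hpmf hY t
      _ ≤ Δ * (Real.exp (-θ) ^ 2) ^ t := by gcongr
  calc _ ≤ Fintype.card V * (((1 + Δ + Δ ^ 2 : ℕ) : ℝ) ^ (T - 1) *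
        ((Δ / (1 - Real.exp (-θ))) ^ T * Real.exp (-θ) ^ ⌈_⌉₊)) :=
        measureReal_exists_le_sup'_blamingChains_le G hT (card_twoHopFinset_le G hdeg) hind
          (Nat.cast_nonneg Δ) (Real.exp_nonneg _) hr1 htail _ _
    _ ≤ Real.exp (-k) := cast_mul_pow_mul_exp_neg_le (by omega) hΔ hθ hk hK.le
end
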